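/- Let q = 2^{2h}, w = 2(q^2−1)/3, c ∈ GF(q^2)* \ U_{q+1}, and let f: U_{q+1} → GF(q^2) be given by f(u) = Σ_{e∈E} a_e u^e for some coefficients a_e ∈ GF(q^2). Then there exist coefficients (b_ℓ)_{ℓ∈E} in GF(q^2) such that (cu+1)^w f((u+c^q)/(cu+1)) = Σ_{ℓ∈E} b_ℓ u^ℓ for all u ∈ U_{q+1}. -/

import Mathlib

/-!
Write `z = c u + 1` and `q = 4 ^ h`. In characteristic 2, `u ^ (q + 1) = 1` gives `u + c ^ q = u z ^ q`,
so `z ^ w ((u + c ^ q) / z) ^ e = u ^ e z ^ N`: since `z ^ (q ^ 2 - 1) = 1`, the exponent `N` can be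
taken to be `∑ d_i` with `d_i = 4 ^ i` for a base-4 digit `1` of `e` and `d_i = q 4 ^ i` for a digit `2`.
Each `d_i` is a power of 2, so `z ^ N = ∏ ((c u) ^ d_i + 1)`. In the expansion of this product,
multiplying `u ^ e` by `u ^ d_i` turns the digit `1` into `2` and, as `u ^ q = u⁻¹`, the digit `2`
into `1`; so every monomial has its exponent in `E` again.
-/

open Finset

def digitExp {n : ℕ} (ε : Fin n → Fin 2) : ℕ := 1 + ∑ i : Fin n, ((ε i : ℕ) + 1) * 4 ^ (i : ℕ)

def flipDigits {n : ℕ} (ε : Fin n → Fin 2) (t : Finset (Fin n)) : Fin n → Fin 2 :=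
  fun i => if i ∈ t then 1 - ε i else ε i

def digitShift {n : ℕ} (ε : Fin n → Fin 2) (i : Fin n) : ℕ :=
  if ε i = 1 then 4 ^ (n + i) else 4 ^ (i : ℕ)

lemma three_mul_sum_four_pow_add_one (n : ℕ) : 3 * ∑ i : Fin n, 4 ^ (i : ℕ) + 1 = 4 ^ n := by
  rw [Fin.sum_univ_eq_sum_range (4 ^ ·), mul_comm]
  exact geom_sum_mul_add 3 n

section Exponents

variable {n : ℕ} (ε : Fin n → Fin 2)

lemma digitExp_eq :
    digitExp ε = 1 + ∑ i : Fin n, 4 ^ (i : ℕ) + ∑ i : Fin n, (ε i : ℕ) * 4 ^ (i : ℕ) := by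
  rw [digitExp, add_assoc, ← sum_add_distrib]
  congr 1
  exact sum_congr rfl fun i _ => by ring

lemma sum_digitShift_add :
    ∑ i, digitShift ε i + ∑ i : Fin n, (ε i : ℕ) * 4 ^ (i : ℕ) =
      ∑ i : Fin n, 4 ^ (i : ℕ) + 4 ^ n * ∑ i : Fin n, (ε i : ℕ) * 4 ^ (i : ℕ) := by
  rw [mul_sum, ← sum_add_distrib, ← sum_add_distrib]
  refine sum_congr rfl fun i _ => ?_
  rw [digitShift]
  generalize ε i = d
  fin_cases d <;> simp [pow_add, add_comm]

lemma add_mul_digitExp :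
    2 * ((4 ^ n) ^ 2 - 1) / 3 + 4 ^ n * digitExp ε =
      ∑ i, digitShift ε i + ((4 ^ n) ^ 2 - 1) + digitExp ε := by
  have hq := three_mul_sum_four_pow_add_one n
  have hN := sum_digitShift_add ε
  rw [digitExp_eq] at *
  set A := ∑ i : Fin n, 4 ^ (i : ℕ)
  set S := ∑ i : Fin n, (ε i : ℕ) * 4 ^ (i : ℕ)
  rw [← hq] at hN ⊢
  have hsq : (3 * A + 1) ^ 2 - 1 = 3 * (A * (3 * A + 2)) := by
    rw [Nat.sub_eq_iff_eq_add (Nat.one_le_pow _ _ (by omega))]; ring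
  rw [hsq, Nat.mul_div_assoc _ (dvd_mul_right 3 _), Nat.mul_div_cancel_left _ (by norm_num)]
  linarith

lemma digitExp_add_sum_digitShift (t : Finset (Fin n)) :
    digitExp ε + ∑ i ∈ t, digitShift ε i =
      digitExp (flipDigits ε t) + (4 ^ n + 1) * ∑ i ∈ t, (ε i : ℕ) * 4 ^ (i : ℕ) := by
  rw [← Fintype.sum_ite_mem t (digitShift ε), ← Fintype.sum_ite_mem t, digitExp, digitExp,
    mul_sum, add_assoc, add_assoc, ← sum_add_distrib, ← sum_add_distrib]
  congr 1
  refine sum_congr rfl fun i _ => ?_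
  rw [digitShift, flipDigits]
  by_cases hi : i ∈ t
  · generalize ε i = d
    fin_cases d <;> simp [hi, pow_add] <;> ring
  · simp [hi]

lemma pow_digitExp_mul_pow_sum_digitShift {M : Type*} [Monoid M] {u : M}
    (hu : u ^ (4 ^ n + 1) = 1) (t : Finset (Fin n)) :
    u ^ digitExp ε * u ^ ∑ i ∈ t, digitShift ε i = u ^ digitExp (flipDigits ε t) := by
  rw [← pow_add, digitExp_add_sum_digitShift, pow_add, pow_mul, hu, one_pow, mul_one]

end Exponents

def monomialSpan (R : Type*) [CommSemiring R] (S : Finset ℕ) (U : Set R) : Submodule R (R → R) where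
  carrier := {f | ∃ b : ℕ → R, ∀ u ∈ U, f u = ∑ l ∈ S, b l * u ^ l}
  add_mem' := by
    rintro f g ⟨b, hb⟩ ⟨b', hb'⟩
    exact ⟨b + b', fun u hu => by simp [hb u hu, hb' u hu, add_mul, sum_add_distrib]⟩
  zero_mem' := ⟨0, by simp⟩
  smul_mem' := by
    rintro k f ⟨b, hb⟩
    exact ⟨k • b, fun u hu => by simp [hb u hu, mul_sum, mul_assoc]⟩

section MonomialSpan

variable {R : Type*} [CommSemiring R] {S : Finset ℕ} {U : Set R}

lemma pow_mem_monomialSpan {l : ℕ} (hl : l ∈ S) : (· ^ l) ∈ monomialSpan R S U :=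
  ⟨fun k => if k = l then 1 else 0, fun u _ => by simp [hl]⟩

lemma mem_monomialSpan_of_eqOn {f g : R → R} (hfg : Set.EqOn f g U)
    (hg : g ∈ monomialSpan R S U) : f ∈ monomialSpan R S U := by
  obtain ⟨b, hb⟩ := hg
  exact ⟨b, fun u hu => (hfg hu).trans (hb u hu)⟩

end MonomialSpan

lemma add_pow_four_pow {R : Type*} [CommSemiring R] [CharP R 2] (x y : R) (j : ℕ) :
    (x + y) ^ 4 ^ j = x ^ 4 ^ j + y ^ 4 ^ j := by
  rw [show 4 ^ j = 2 ^ (2 * j) by rw [pow_mul]; norm_num]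
  exact add_pow_char_pow x y 2 (2 * j)

section CharTwo

variable {F : Type*} [Field F] [CharP F 2] {n : ℕ} {c u : F}

lemma add_pow_eq_mul_add_one_pow (hu : u ^ (4 ^ n + 1) = 1) :
    u + c ^ 4 ^ n = u * (c * u + 1) ^ 4 ^ n := by
  rw [add_pow_four_pow, mul_pow, one_pow, mul_add, mul_one, mul_left_comm, ← pow_succ', hu,
    mul_one, add_comm]

lemma mul_add_one_pow_sum_digitShift (ε : Fin n → Fin 2) :
    (c * u + 1) ^ ∑ i, digitShift ε i = ∑ t ∈ univ.powerset, (c * u) ^ ∑ i ∈ t, digitShift ε i := by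
  have hshift : ∀ i, (c * u + 1) ^ digitShift ε i = (c * u) ^ digitShift ε i + 1 := fun i => by
    rw [digitShift]; split_ifs <;> rw [add_pow_four_pow, one_pow]
  simp only [← prod_pow_eq_pow_sum, hshift, prod_add_one]

lemma mul_add_one_pow_mul_div_pow_digitExp (hu : u ^ (4 ^ n + 1) = 1) (hz : c * u + 1 ≠ 0)
    (hz1 : (c * u + 1) ^ ((4 ^ n) ^ 2 - 1) = 1) (ε : Fin n → Fin 2) :
    (c * u + 1) ^ (2 * ((4 ^ n) ^ 2 - 1) / 3) * ((u + c ^ 4 ^ n) / (c * u + 1)) ^ digitExp ε =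
      ∑ t ∈ univ.powerset, c ^ (∑ i ∈ t, digitShift ε i) * u ^ digitExp (flipDigits ε t) := by
  have hz_pow : (c * u + 1) ^ (2 * ((4 ^ n) ^ 2 - 1) / 3) * ((c * u + 1) ^ 4 ^ n) ^ digitExp ε =
      (c * u + 1) ^ (∑ i, digitShift ε i) * (c * u + 1) ^ digitExp ε := by
    rw [← pow_mul (c * u + 1) (4 ^ n), ← pow_add, add_mul_digitExp, pow_add, pow_add, hz1, mul_one]
  calc (c * u + 1) ^ (2 * ((4 ^ n) ^ 2 - 1) / 3) * ((u + c ^ 4 ^ n) / (c * u + 1)) ^ digitExp ε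
      = u ^ digitExp ε * (c * u + 1) ^ ∑ i, digitShift ε i := by
        rw [add_pow_eq_mul_add_one_pow hu, div_pow, mul_pow, mul_div_assoc', mul_left_comm, hz_pow,
          mul_div_assoc, mul_div_cancel_right₀ _ (pow_ne_zero _ hz)]
    _ = _ := by
        rw [mul_add_one_pow_sum_digitShift, mul_sum]
        refine sum_congr rfl fun t _ => ?_
        rw [mul_pow, mul_left_comm, pow_digitExp_mul_pow_sum_digitShift ε hu]

lemma mul_add_one_ne_zero (hcU : c ^ (4 ^ n + 1) ≠ 1) (hu : u ^ (4 ^ n + 1) = 1) :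
    c * u + 1 ≠ 0 := by
  intro hz
  apply hcU
  calc c ^ (4 ^ n + 1) = (c * u) ^ (4 ^ n + 1) := by rw [mul_pow, hu, mul_one]
    _ = 1 := by rw [CharTwo.add_eq_zero.mp hz, one_pow]

lemma mem_monomialSpan_mul_add_one_pow [Fintype F] (hF : Fintype.card F = (4 ^ n) ^ 2)
    (hcU : c ^ (4 ^ n + 1) ≠ 1) {e : ℕ} (he : e ∈ (univ : Finset (Fin n → Fin 2)).image digitExp) :
    (fun u => (c * u + 1) ^ (2 * ((4 ^ n) ^ 2 - 1) / 3) * ((u + c ^ 4 ^ n) / (c * u + 1)) ^ e) ∈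
      monomialSpan F ((univ : Finset (Fin n → Fin 2)).image digitExp) {u | u ^ (4 ^ n + 1) = 1} := by
  obtain ⟨ε, -, rfl⟩ := mem_image.mp he
  refine mem_monomialSpan_of_eqOn (g := ∑ t ∈ univ.powerset,
      c ^ (∑ i ∈ t, digitShift ε i) • (· ^ digitExp (flipDigits ε t))) (fun u hu => ?_) <|
    sum_mem fun t _ => Submodule.smul_mem _ (c ^ ∑ i ∈ t, digitShift ε i) <|
      pow_mem_monomialSpan (mem_image_of_mem _ (mem_univ (flipDigits ε t)))
  have hz := mul_add_one_ne_zero hcU hu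
  have hz1 := FiniteField.pow_card_sub_one_eq_one _ hz
  rw [hF] at hz1
  simpa using mul_add_one_pow_mul_div_pow_digitExp hu hz hz1 ε

end CharTwo

theorem stmt_15_general (h : ℕ) (F : Type) [Field F] [Fintype F]
    (hF : Fintype.card F = (4 ^ h) ^ 2) (c : F)
    (hcU : c ^ (4 ^ h + 1) ≠ 1) (a : ℕ → F) :
    let q := 4 ^ h
    let w := 2 * (q ^ 2 - 1) / 3
    let E : Finset ℕ := (Finset.univ : Finset (Fin h → Fin 2)).image
      (fun f => 1 + ∑ i : Fin h, ((f i : ℕ) + 1) * 4 ^ (i : ℕ))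
    ∃ b : ℕ → F, ∀ u : F, u ^ (q + 1) = 1 →
      (c * u + 1) ^ w * (∑ e ∈ E, a e * ((u + c ^ q) / (c * u + 1)) ^ e) =
        ∑ l ∈ E, b l * u ^ l := by
  intro q w E
  have : CharP F 2 := charP_of_card_eq_prime_pow (f := 4 * h) <| by
    rw [hF, ← pow_mul, show 4 = 2 ^ 2 from rfl, ← pow_mul]; ring_nf
  have hsum : (fun u => (c * u + 1) ^ w * ∑ e ∈ E, a e * ((u + c ^ q) / (c * u + 1)) ^ e) =
      ∑ e ∈ E, a e • fun u => (c * u + 1) ^ w * ((u + c ^ q) / (c * u + 1)) ^ e := by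
    funext u
    simp [mul_sum, mul_left_comm]
  have hmem : (fun u => (c * u + 1) ^ w * ∑ e ∈ E, a e * ((u + c ^ q) / (c * u + 1)) ^ e) ∈
      monomialSpan F E {u | u ^ (q + 1) = 1} := hsum ▸
    sum_mem fun e he => Submodule.smul_mem _ (a e) (mem_monomialSpan_mul_add_one_pow hF hcU he)
  exact hmem

theorem stmt_15 (h : ℕ) (hh : 1 ≤ h) (F : Type) [Field F] [Fintype F]
    (hF : Fintype.card F = (4 ^ h) ^ 2) (c : F) (hc0 : c ≠ 0)
    (hcU : c ^ (4 ^ h + 1) ≠ 1) (a : ℕ → F) :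
    let q := 4 ^ h
    let w := 2 * (q ^ 2 - 1) / 3
    let E : Finset ℕ := (Finset.univ : Finset (Fin h → Fin 2)).image
      (fun f => 1 + ∑ i : Fin h, ((f i : ℕ) + 1) * 4 ^ (i : ℕ))
    ∃ b : ℕ → F, ∀ u : F, u ^ (q + 1) = 1 →
      (c * u + 1) ^ w * (∑ e ∈ E, a e * ((u + c ^ q) / (c * u + 1)) ^ e) =
        ∑ l ∈ E, b l * u ^ l :=
  stmt_15_general h F hF c hcU a
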